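/- For every K ≥ 1, every U with 1 ≤ U ≤ K, every n ≥ 1 and every α₁ > 0: the total mass Σ_{z : Fin n → Fin K, ∀ i (z i : ℕ) < U} p(z) of allocations taking values only among the first U components tends to 1 as α₂ → 0⁺; consequently, Σ_{u=1}^{U} Pr(K⁺ = u | K, n, α₁, α₂) tends to 1 as α₂ → 0⁺ (in the limit α₂ → 0, U becomes a hard upper bound on the number of occupied components). -/

import Mathlib

open Filter Topology Finset

/-- Number of indices `i` with `z i = k`. -/
def nk {n K : ℕ} (z : Fin n → Fin K) (k : Fin K) : ℕ :=
  (Finset.univ.filter (fun i => z i = k)).card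

/-- Number of occupied components (distinct values taken by `z`). -/
def Kplus {n K : ℕ} (z : Fin n → Fin K) : ℕ :=
  (Finset.univ.image z).card

/-- Marginal allocation probability under an asymmetric Dirichlet(α₁ on first U
coordinates, α₂ on the rest) prior on the mixture weights. -/
noncomputable def pz (K U n : ℕ) (α₁ α₂ : ℝ) (z : Fin n → Fin K) : ℝ :=
  (Real.Gamma ((U : ℝ) * α₁ + ((K : ℝ) - (U : ℝ)) * α₂) /
      Real.Gamma ((U : ℝ) * α₁ + ((K : ℝ) - (U : ℝ)) * α₂ + (n : ℝ))) *
    ∏ k : Fin K,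
      Real.Gamma ((if (k : ℕ) < U then α₁ else α₂) + (nk z k : ℝ)) /
        Real.Gamma (if (k : ℕ) < U then α₁ else α₂)

/-- Prior probability that the number of occupied components equals `u`. -/
noncomputable def prKplus (K U n : ℕ) (α₁ α₂ : ℝ) (u : ℕ) : ℝ :=
  ∑ z ∈ Finset.univ.filter (fun z : Fin n → Fin K => Kplus z = u),
    pz K U n α₁ α₂ z

/- ### Auxiliary lemmas -/

lemma nk_cons {n K : ℕ} (j : Fin K) (z : Fin n → Fin K) (k : Fin K) :
    nk (Fin.cons j z) k = (if j = k then 1 else 0) + nk z k := by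
  simp only [nk, Finset.card_filter]
  rw [Fin.sum_univ_succ]
  simp [Fin.cons_succ]

lemma sum_nk {n K : ℕ} (z : Fin n → Fin K) : ∑ k, (nk z k : ℝ) = n := by
  have : ∑ k, nk z k = n := by
    simp only [nk, Finset.card_filter]
    rw [Finset.sum_comm]; simp
  exact_mod_cast this

lemma key (K : ℕ) (α : Fin K → ℝ) (hα : ∀ k, 0 < α k) (n : ℕ) :
    ∑ z : Fin n → Fin K, ∏ k, Real.Gamma (α k + nk z k) =
      (∏ i ∈ Finset.range n, ((∑ k, α k) + i)) * ∏ k, Real.Gamma (α k) := by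
  induction n with
  | zero =>
    simp [nk]
  | succ m ih =>
    have he : ∑ z : Fin (m+1) → Fin K, ∏ k, Real.Gamma (α k + nk z k) =
        ∑ p : Fin K × (Fin m → Fin K), ∏ k, Real.Gamma (α k + nk (Fin.cons p.1 p.2) k) :=
      (Fintype.sum_equiv (Fin.consEquiv fun _ => Fin K)
        _ _ (fun p => rfl)).symm
    rw [he, Fintype.sum_prod_type]
    have hterm : ∀ (j : Fin K) (z : Fin m → Fin K),
        ∏ k, Real.Gamma (α k + nk (Fin.cons j z) k) =
          (α j + nk z j) * ∏ k, Real.Gamma (α k + nk z k) := by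
      intro j z
      have h1 : ∀ k, (nk (Fin.cons j z) k : ℝ) = (if j = k then 1 else 0) + nk z k := by
        intro k; rw [nk_cons]; push_cast; ring
      rw [Finset.prod_eq_mul_prod_sdiff_singleton_of_mem (Finset.mem_univ j)
          (fun k => Real.Gamma (α k + nk (Fin.cons j z) k)),
        Finset.prod_eq_mul_prod_sdiff_singleton_of_mem (Finset.mem_univ j)
          (fun k => Real.Gamma (α k + nk z k))]
      have h2 : α j + (nk (Fin.cons j z) j : ℝ) = (α j + nk z j) + 1 := by
        rw [h1 j]; simp; ring
      rw [h2, Real.Gamma_add_one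
        (lt_of_lt_of_le (hα j) (le_add_of_nonneg_right (Nat.cast_nonneg _))).ne']
      rw [← mul_assoc]
      congr 1
      apply Finset.prod_congr rfl
      intro k hk
      simp only [Finset.mem_sdiff, Finset.mem_singleton] at hk
      rw [h1 k, if_neg (fun h => hk.2 h.symm)]
      ring
    calc ∑ j : Fin K, ∑ z : Fin m → Fin K, ∏ k, Real.Gamma (α k + nk (Fin.cons j z) k)
        = ∑ z : Fin m → Fin K, ∑ j : Fin K, (α j + nk z j) * ∏ k, Real.Gamma (α k + nk z k) := by
          rw [Finset.sum_comm]
          exact Finset.sum_congr rfl fun z _ => Finset.sum_congr rfl fun j _ => hterm j z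
      _ = ∑ z : Fin m → Fin K, ((∑ j, α j) + m) * ∏ k, Real.Gamma (α k + nk z k) := by
          refine Finset.sum_congr rfl fun z _ => ?_
          rw [← Finset.sum_mul, Finset.sum_add_distrib, sum_nk]
      _ = (∏ i ∈ Finset.range (m+1), ((∑ k, α k) + i)) * ∏ k, Real.Gamma (α k) := by
          rw [← Finset.mul_sum, ih, Finset.prod_range_succ]
          ring

lemma Gamma_add_nat (A : ℝ) (hA : 0 < A) (n : ℕ) :
    Real.Gamma (A + n) = (∏ i ∈ Finset.range n, (A + i)) * Real.Gamma A := by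
  induction n with
  | zero => simp
  | succ m ih =>
    have h : A + (m+1 : ℕ) = (A + m) + 1 := by push_cast; ring
    rw [h, Real.Gamma_add_one (by positivity), ih, Finset.prod_range_succ]
    push_cast
    ring

lemma card_lt_U (K U : ℕ) (hUK : U ≤ K) :
    (Finset.univ.filter fun k : Fin K => (k : ℕ) < U).card = U := by
  have h : (Finset.univ.filter fun k : Fin K => (k : ℕ) < U) =
      (Finset.range U).attachFin (fun m hm => lt_of_lt_of_le (Finset.mem_range.mp hm) hUK) := by
    ext k; simp [Finset.mem_attachFin]
  rw [h, Finset.card_attachFin, Finset.card_range]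

lemma sum_alpha (K U : ℕ) (α₁ α₂ : ℝ) (hUK : U ≤ K) :
    ∑ k : Fin K, (if (k : ℕ) < U then α₁ else α₂) =
      (U : ℝ) * α₁ + ((K : ℝ) - (U : ℝ)) * α₂ := by
  rw [Finset.sum_ite, Finset.sum_const, Finset.sum_const, card_lt_U K U hUK,
    Finset.filter_not, Finset.card_sdiff_of_subset (Finset.filter_subset _ _), card_lt_U K U hUK]
  simp only [Finset.card_univ, Fintype.card_fin, nsmul_eq_mul]
  push_cast [Nat.cast_sub hUK]
  ring

lemma gamma_contAt {s : ℝ} (hs : 0 < s) : ContinuousAt Real.Gamma s :=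
  (Real.differentiableAt_Gamma fun m =>
    (lt_of_le_of_lt (neg_nonpos.mpr (Nat.cast_nonneg m)) hs).ne').continuousAt

lemma sum_pz_one (K U n : ℕ) (hU1 : 1 ≤ U) (hUK : U ≤ K) (α₁ α₂ : ℝ)
    (hα₁ : 0 < α₁) (hα₂ : 0 < α₂) :
    ∑ z : Fin n → Fin K, pz K U n α₁ α₂ z = 1 := by
  set α : Fin K → ℝ := fun k => if (k : ℕ) < U then α₁ else α₂ with hαdef
  have hαpos : ∀ k, 0 < α k := fun k => by
    simp only [hαdef]; split <;> assumption
  set A : ℝ := (U : ℝ) * α₁ + ((K : ℝ) - (U : ℝ)) * α₂ with hAdef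
  have hAeq : ∑ k, α k = A := sum_alpha K U α₁ α₂ hUK
  have hA : 0 < A := by
    rw [← hAeq]
    exact Finset.sum_pos (fun k _ => hαpos k)
      ⟨⟨0, lt_of_lt_of_le hU1 hUK⟩, Finset.mem_univ _⟩
  have hGA : Real.Gamma A ≠ 0 := (Real.Gamma_pos_of_pos hA).ne'
  have hprodpos : 0 < ∏ i ∈ Finset.range n, (A + i) :=
    Finset.prod_pos fun i _ => by positivity
  have hGprod : (0:ℝ) < ∏ k, Real.Gamma (α k) :=
    Finset.prod_pos fun k _ => Real.Gamma_pos_of_pos (hαpos k)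
  have hstep : ∀ z : Fin n → Fin K,
      pz K U n α₁ α₂ z = (Real.Gamma A / Real.Gamma (A + n)) *
        ((∏ k, Real.Gamma (α k + nk z k)) / ∏ k, Real.Gamma (α k)) := by
    intro z
    rw [pz, Finset.prod_div_distrib]
  rw [Finset.sum_congr rfl fun z _ => hstep z, ← Finset.mul_sum, ← Finset.sum_div,
    key K α hαpos n, hAeq, Gamma_add_nat A hA n]
  field_simp

lemma pz_tendsto_zero (K U n : ℕ) (hU1 : 1 ≤ U) (hUK : U ≤ K) (α₁ : ℝ) (hα₁ : 0 < α₁)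
    (z : Fin n → Fin K) (hz : ∃ i, U ≤ (z i : ℕ)) :
    Tendsto (fun α₂ : ℝ => pz K U n α₁ α₂ z) (𝓝[>] 0) (𝓝 0) := by
  have hUα : (0:ℝ) < (U : ℝ) * α₁ := by
    have : (0:ℝ) < (U:ℝ) := by exact_mod_cast hU1
    positivity
  have hA : Tendsto (fun α₂ : ℝ => (U : ℝ) * α₁ + ((K : ℝ) - (U : ℝ)) * α₂)
      (𝓝[>] 0) (𝓝 ((U : ℝ) * α₁)) := by
    have hc : Continuous fun α₂ : ℝ => (U : ℝ) * α₁ + ((K : ℝ) - (U : ℝ)) * α₂ := by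
      continuity
    have := (hc.tendsto 0).mono_left (nhdsWithin_le_nhds (s := Set.Ioi (0:ℝ)))
    simpa using this
  -- limit of the prefactor
  have hC : Tendsto (fun α₂ : ℝ =>
      Real.Gamma ((U : ℝ) * α₁ + ((K : ℝ) - (U : ℝ)) * α₂) /
      Real.Gamma ((U : ℝ) * α₁ + ((K : ℝ) - (U : ℝ)) * α₂ + (n : ℝ)))
      (𝓝[>] 0) (𝓝 (Real.Gamma ((U:ℝ)*α₁) / Real.Gamma ((U:ℝ)*α₁ + n))) := by
    refine Tendsto.div ((gamma_contAt hUα).tendsto.comp hA)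
      (((gamma_contAt (by positivity)).tendsto.comp (hA.add_const (n:ℝ))))
      (Real.Gamma_pos_of_pos (by positivity)).ne'
  -- limits of the factor functions
  set L : Fin K → ℝ := fun k => if (k : ℕ) < U then
      Real.Gamma (α₁ + nk z k) / Real.Gamma α₁
    else (if nk z k = 0 then 1 else 0) with hLdef
  have hfac : ∀ k : Fin K, Tendsto (fun α₂ : ℝ =>
      Real.Gamma ((if (k : ℕ) < U then α₁ else α₂) + (nk z k : ℝ)) /
        Real.Gamma (if (k : ℕ) < U then α₁ else α₂)) (𝓝[>] 0) (𝓝 (L k)) := by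
    intro k
    by_cases hk : (k : ℕ) < U
    · simp only [hLdef, if_pos hk]
      exact tendsto_const_nhds
    · simp only [hLdef, if_neg hk]
      by_cases hm : nk z k = 0
      · simp only [hm, if_pos, Nat.cast_zero, add_zero]
        refine Tendsto.congr' ?_ (tendsto_const_nhds (x := (1:ℝ)))
        filter_upwards [self_mem_nhdsWithin] with x hx
        rw [div_self (Real.Gamma_pos_of_pos hx).ne']
      · simp only [if_neg hm]
        have hm1 : (1:ℝ) ≤ (nk z k : ℝ) := by
          exact_mod_cast Nat.one_le_iff_ne_zero.mpr hm
        have heq : ∀ᶠ x in 𝓝[>] (0:ℝ),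
            x * Real.Gamma (x + nk z k) / Real.Gamma (x + 1) =
            Real.Gamma (x + nk z k) / Real.Gamma x := by
          filter_upwards [self_mem_nhdsWithin] with x hx
          have hx0 : (0:ℝ) < x := hx
          rw [Real.Gamma_add_one hx0.ne', mul_div_mul_left _ _ hx0.ne']
        refine Tendsto.congr' heq ?_
        have h1 : Tendsto (fun x : ℝ => x * Real.Gamma (x + nk z k) / Real.Gamma (x + 1))
            (𝓝[>] 0) (𝓝 (0 * Real.Gamma (0 + nk z k) / Real.Gamma (0 + 1))) := by
          have hid : Tendsto (fun x : ℝ => x) (𝓝[>] (0:ℝ)) (𝓝 0) :=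
            tendsto_id.mono_left nhdsWithin_le_nhds
          refine Tendsto.div (Tendsto.mul hid
            ((gamma_contAt (by linarith)).tendsto.comp (hid.add_const _)))
            ((gamma_contAt (by norm_num)).tendsto.comp (hid.add_const _)) ?_
          simpa using Real.Gamma_one ▸ (by norm_num : (1:ℝ) ≠ 0)
        simpa using h1
  have hmain : Tendsto (fun α₂ : ℝ => pz K U n α₁ α₂ z) (𝓝[>] 0)
      (𝓝 ((Real.Gamma ((U:ℝ)*α₁) / Real.Gamma ((U:ℝ)*α₁ + n)) * ∏ k, L k)) := by
    exact hC.mul (tendsto_finset_prod _ fun k _ => hfac k)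
  have hzero : ∏ k, L k = 0 := by
    obtain ⟨i, hi⟩ := hz
    refine Finset.prod_eq_zero (Finset.mem_univ (z i)) ?_
    have hk : ¬ ((z i : ℕ) < U) := not_lt.mpr hi
    have hmk : nk z (z i) ≠ 0 := by
      have hmem : i ∈ Finset.univ.filter fun j => z j = z i :=
        Finset.mem_filter.mpr ⟨Finset.mem_univ i, rfl⟩
      exact Finset.card_ne_zero_of_mem hmem
    simp [hLdef, hk, hmk]
  rw [hzero, mul_zero] at hmain
  exact hmain

lemma kplus_le_of_lt {K U n : ℕ} (hUK : U ≤ K) (z : Fin n → Fin K)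
    (h : ∀ i, (z i : ℕ) < U) : Kplus z ≤ U := by
  have hsub : Finset.univ.image z ⊆ Finset.univ.filter fun k : Fin K => (k : ℕ) < U := by
    intro k hk
    obtain ⟨i, _, rfl⟩ := Finset.mem_image.mp hk
    exact Finset.mem_filter.mpr ⟨Finset.mem_univ _, h i⟩
  calc Kplus z ≤ (Finset.univ.filter fun k : Fin K => (k : ℕ) < U).card :=
        Finset.card_le_card hsub
    _ = U := card_lt_U K U hUK

lemma main_aux (K U n : ℕ) (hU1 : 1 ≤ U) (hUK : U ≤ K) (α₁ : ℝ) (hα₁ : 0 < α₁)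
    (G : Finset (Fin n → Fin K)) (hG : ∀ z ∉ G, ∃ i, U ≤ (z i : ℕ)) :
    Tendsto (fun α₂ : ℝ => ∑ z ∈ G, pz K U n α₁ α₂ z) (𝓝[>] 0) (𝓝 1) := by
  have heq : ∀ᶠ α₂ in 𝓝[>] (0:ℝ),
      ∑ z ∈ G, pz K U n α₁ α₂ z = 1 - ∑ z ∈ Gᶜ, pz K U n α₁ α₂ z := by
    filter_upwards [self_mem_nhdsWithin] with x hx
    have h := Finset.sum_add_sum_compl G (pz K U n α₁ x)
    rw [sum_pz_one K U n hU1 hUK α₁ x hα₁ hx] at h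
    linarith
  have hbad : Tendsto (fun α₂ : ℝ => ∑ z ∈ Gᶜ, pz K U n α₁ α₂ z) (𝓝[>] 0) (𝓝 0) := by
    have := tendsto_finset_sum (Gᶜ) fun z hz =>
      pz_tendsto_zero K U n hU1 hUK α₁ hα₁ z (hG z (Finset.mem_compl.mp hz))
    simpa using this
  have : Tendsto (fun α₂ : ℝ => 1 - ∑ z ∈ Gᶜ, pz K U n α₁ α₂ z) (𝓝[>] 0) (𝓝 1) := by
    simpa using (tendsto_const_nhds (x := (1:ℝ))).sub hbad
  exact Tendsto.congr' (Filter.EventuallyEq.symm heq) this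

theorem stmt_6 (K U n : ℕ) (hK : 1 ≤ K) (hU1 : 1 ≤ U) (hUK : U ≤ K)
    (hn : 1 ≤ n) (α₁ : ℝ) (hα₁ : 0 < α₁) :
    Tendsto
      (fun α₂ : ℝ =>
        ∑ z ∈ Finset.univ.filter (fun z : Fin n → Fin K => ∀ i, (z i : ℕ) < U),
          pz K U n α₁ α₂ z)
      (𝓝[>] 0) (𝓝 1) ∧
    Tendsto
      (fun α₂ : ℝ => ∑ u ∈ Finset.Icc 1 U, prKplus K U n α₁ α₂ u)
      (𝓝[>] 0) (𝓝 1) := by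
  constructor
  · apply main_aux K U n hU1 hUK α₁ hα₁
    intro z hz
    simp only [Finset.mem_filter, Finset.mem_univ, true_and, not_forall, not_lt] at hz
    exact hz
  · have hre : (fun α₂ : ℝ => ∑ u ∈ Finset.Icc 1 U, prKplus K U n α₁ α₂ u) =
        fun α₂ : ℝ => ∑ z ∈ Finset.univ.filter
          (fun z : Fin n → Fin K => Kplus z ∈ Finset.Icc 1 U), pz K U n α₁ α₂ z := by
      funext α₂
      simp only [prKplus]
      exact Finset.sum_fiberwise_eq_sum_filter Finset.univ (Finset.Icc 1 U) Kplus _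
    rw [hre]
    apply main_aux K U n hU1 hUK α₁ hα₁
    intro z hz
    simp only [Finset.mem_filter, Finset.mem_univ, true_and, Finset.mem_Icc, not_and, not_le] at hz
    have h1 : 1 ≤ Kplus z := by
      have : (Finset.univ.image z).Nonempty := by
        refine ⟨z ⟨0, hn⟩, Finset.mem_image_of_mem z (Finset.mem_univ _)⟩
      exact Finset.card_pos.mpr this
    have hUlt : U < Kplus z := hz h1
    by_contra hc
    push_neg at hc
    exact absurd (kplus_le_of_lt hUK z fun i => hc i) (not_le.mpr hUlt)
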